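/- If a finite simple graph G is positive, then there exists an even homomorphism of G into itself, i.e., a graph homomorphism φ : G → G such that for every edge e of G, the number of edges of G mapped by φ onto e is even. -/

import Mathlib

open MeasureTheory

noncomputable section

/-- The unit interval `[0,1]` as a measure space. -/
abbrev UI : Type := Set.Icc (0:ℝ) 1

/-- A kernel is a symmetric bounded measurable function `[0,1]² → ℝ`. -/
def IsKernel (W : UI → UI → ℝ) : Prop :=
  Measurable (Function.uncurry W) ∧ (∀ x y, W x y = W y x) ∧ ∃ C : ℝ, ∀ x y, |W x y| ≤ C

open scoped Classical in
/-- The homomorphism density `t(G,W) = ∫_{[0,1]^V} ∏_{(a,b)∈E} W(p(a),p(b)) dp`. -/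
noncomputable def homDensity {V : Type} [Fintype V] (G : SimpleGraph V) (W : UI → UI → ℝ) : ℝ :=
  ∫ p : V → UI, ∏ e ∈ G.edgeFinset, W (p (Quot.out e).1) (p (Quot.out e).2)

/-- A graph is positive if `t(G,W) ≥ 0` for every kernel `W`. -/
def Positive {V : Type} [Fintype V] (G : SimpleGraph V) : Prop :=
  ∀ W : UI → UI → ℝ, IsKernel W → 0 ≤ homDensity G W


open scoped Classical in
/-- A graph homomorphism `f : G → H` is even if for every edge `e` of `H`, the number of
edges of `G` mapped by `f` onto `e` is even. -/
def IsEvenHom {V V' : Type} [Fintype V] [Fintype V'] {G : SimpleGraph V} {H : SimpleGraph V'}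
    (f : G →g H) : Prop :=
  ∀ e ∈ H.edgeFinset, Even ((G.edgeFinset.filter (fun e' => Sym2.map (⇑f) e' = e)).card)


/-! For a signing `σ` of the edges of `G`, let `W σ` be the step kernel of the signed adjacency
matrix of `G` over a partition of `[0,1]` into `|V|` parts of positive measure. Expanding
`t(G, W σ)` as a sum over maps `φ : V → V` and summing over all signings, the signing sum
factorises over the edges of `G`, so the contribution of `φ` vanishes unless `φ` is an even
homomorphism: a fiber of odd size contributes `1 + (-1) = 0`. Hence if `G` had no even
self-homomorphism, the nonnegative numbers `t(G, W σ)` would sum to `0`, whereas for the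
all-positive signing the identity map contributes a positive term. -/

open Finset
open scoped Classical ENNReal

namespace PositiveGraph

section StepKernels

variable {U : Type*} [Fintype U] [MeasurableSpace U] [MeasurableSingletonClass U]

theorem integral_comp_pi_eq_sum {ι X : Type*} [Fintype ι] [MeasurableSpace X] {μ : Measure X}
    [IsFiniteMeasure μ] {f : X → U} (hf : Measurable f) (F : (ι → U) → ℝ) :
    ∫ p, F (fun i => f (p i)) ∂Measure.pi (fun _ : ι => μ)
      = ∑ φ : ι → U, (∏ i, μ.real (f ⁻¹' {φ i})) * F φ := by
  have hfp : Measurable fun (p : ι → X) (i : ι) => f (p i) :=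
    measurable_pi_lambda _ fun i => hf.comp (measurable_pi_apply i)
  rw [← integral_map hfp.aemeasurable (measurable_of_finite F).aestronglyMeasurable,
    Measure.pi_map_pi fun _ => hf.aemeasurable, integral_fintype .of_finite]
  refine sum_congr rfl fun φ _ => ?_
  rw [smul_eq_mul, measureReal_def, Measure.pi_singleton, ENNReal.toReal_prod]
  simp only [Measure.map_apply hf (measurableSet_singleton _), measureReal_def]

theorem isKernel_sym2_comp (ω : Sym2 U → ℝ) {f : UI → U} (hf : Measurable f) :
    IsKernel fun x y => ω s(f x, f y) := by
  refine ⟨?_, fun x y => by simp only [Sym2.eq_swap], ∑ e, |ω e|, fun x y => ?_⟩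
  · exact (measurable_of_finite fun q : U × U => ω s(q.1, q.2)).comp (hf.prodMap hf)
  · exact single_le_sum (fun e _ => abs_nonneg (ω e)) (mem_univ _)

theorem homDensity_sym2_comp {V : Type} [Fintype V] (G : SimpleGraph V) (ω : Sym2 U → ℝ)
    {f : UI → U} (hf : Measurable f) :
    homDensity G (fun x y => ω s(f x, f y))
      = ∑ φ : V → U, (∏ v, volume.real (f ⁻¹' {φ v})) * ∏ e ∈ G.edgeFinset, ω (e.map φ) := by
  have hout (φ : V → U) (e : Sym2 V) : s(φ (Quot.out e).1, φ (Quot.out e).2) = e.map φ := by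
    conv_rhs => rw [← Quot.out_eq e]
    rfl
  simp only [homDensity, hout (fun v => f _)]
  exact integral_comp_pi_eq_sum hf fun φ => ∏ e ∈ G.edgeFinset, ω (e.map φ)

end StepKernels

theorem volume_val_preimage_of_subset {A : Set ℝ} (hA : A ⊆ Set.Icc 0 1) :
    volume (Subtype.val ⁻¹' A : Set UI) = volume A := by
  rw [Measure.Subtype.volume_def, (MeasurableEmbedding.subtype_coe measurableSet_Icc).comap_apply,
    Subtype.image_preimage_coe, Set.inter_eq_right.mpr hA]

theorem exists_measurable_forall_volume_preimage_pos (U : Type*) [Finite U] [Nonempty U]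
    [MeasurableSpace U] : ∃ f : UI → U, Measurable f ∧ ∀ u, 0 < volume.real (f ⁻¹' {u}) := by
  obtain ⟨n, ⟨e⟩⟩ := Finite.exists_equiv_fin U
  have hn : (0 : ℝ) < n := Nat.cast_pos.mpr (Fin.pos_iff_nonempty.mpr ⟨e (Classical.arbitrary U)⟩)
  let g : ℕ → U := fun k => if h : k < n then e.symm ⟨k, h⟩ else Classical.arbitrary U
  refine ⟨fun x => g ⌊(x : ℝ) * n⌋₊,
    (measurable_from_nat (f := g)).comp (measurable_subtype_coe.mul_const (n : ℝ)).nat_floor,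
    fun u => ?_⟩
  set i : ℕ := (e u : ℕ)
  have hsub : (Subtype.val ⁻¹' Set.Ioo (i / n : ℝ) ((i + 1) / n) : Set UI)
      ⊆ (fun x : UI => g ⌊(x : ℝ) * n⌋₊) ⁻¹' {u} := by
    rintro x ⟨h1, h2⟩
    have hfloor : ⌊(x : ℝ) * n⌋₊ = i := by
      rw [div_lt_iff₀ hn] at h1
      rw [lt_div_iff₀ hn] at h2
      rw [Nat.floor_eq_iff (mul_nonneg x.2.1 hn.le)]
      exact ⟨h1.le, h2⟩
    simp [hfloor, g, i]
  have hIoo : Set.Ioo (i / n : ℝ) ((i + 1) / n) ⊆ Set.Icc 0 1 := by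
    intro y ⟨h1, h2⟩
    have : (i : ℝ) + 1 ≤ n := by exact_mod_cast (e u).isLt
    refine ⟨le_trans (by positivity) h1.le, h2.le.trans ?_⟩
    rw [div_le_one hn]
    exact this
  refine ENNReal.toReal_pos (ne_of_gt ?_) (measure_ne_top _ _)
  calc (0 : ℝ≥0∞) < volume (Set.Ioo (i / n : ℝ) ((i + 1) / n)) := by
        rw [Real.volume_Ioo, ENNReal.ofReal_pos]
        exact sub_pos.mpr ((div_lt_div_iff_of_pos_right hn).mpr (lt_add_one _))
    _ = volume (Subtype.val ⁻¹' Set.Ioo (i / n : ℝ) ((i + 1) / n) : Set UI) :=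
        (volume_val_preimage_of_subset hIoo).symm
    _ ≤ _ := measure_mono hsub

theorem sum_prod_sign_comp {α β : Type*} [Fintype β] [DecidableEq β] (s : Finset α) (g : α → β) :
    ∑ σ : β → Bool, ∏ a ∈ s, (if σ (g a) then (-1 : ℝ) else 1)
      = ∏ b, if Even #{a ∈ s | g a = b} then 2 else 0 := by
  calc ∑ σ : β → Bool, ∏ a ∈ s, (if σ (g a) then (-1 : ℝ) else 1)
      = ∑ σ : β → Bool, ∏ b, (if σ b then (-1 : ℝ) else 1) ^ #{a ∈ s | g a = b} := by
        refine sum_congr rfl fun σ _ => ?_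
        rw [← prod_fiberwise s g]
        refine prod_congr rfl fun b _ => ?_
        rw [prod_congr rfl fun a ha => by rw [(mem_filter.mp ha).2],
          prod_const]
    _ = ∏ b, ∑ t : Bool, (if t then (-1 : ℝ) else 1) ^ #{a ∈ s | g a = b} := by
        rw [Fintype.prod_sum]
    _ = ∏ b, if Even #{a ∈ s | g a = b} then 2 else 0 := by
        refine prod_congr rfl fun b _ => ?_
        rcases Nat.even_or_odd #{a ∈ s | g a = b} with h | h
        · norm_num [h.neg_one_pow, h]
        · simp [h.neg_one_pow, Nat.not_even_iff_odd.mpr h]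

def signedEdgeWeight {V : Type*} (G : SimpleGraph V) (σ : Sym2 V → Bool) (e : Sym2 V) : ℝ :=
  if e ∈ G.edgeSet then (if σ e then -1 else 1) else 0

theorem sum_prod_signedEdgeWeight_eq_zero {V V' : Type} [Fintype V] [Fintype V']
    {G : SimpleGraph V} {H : SimpleGraph V'} (hG : ∀ ψ : G →g H, ¬IsEvenHom ψ) (φ : V → V') :
    ∑ σ, ∏ e ∈ G.edgeFinset, signedEdgeWeight H σ (e.map φ) = 0 := by
  by_cases hφ : ∀ a b, G.Adj a b → H.Adj (φ a) (φ b)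
  · let ψ : G →g H := ⟨φ, hφ _ _⟩
    obtain ⟨b, -, hodd⟩ : ∃ b ∈ H.edgeFinset,
        ¬Even #{e ∈ G.edgeFinset | e.map φ = b} := by
      simpa [IsEvenHom, ψ] using hG ψ
    have hsign (σ : Sym2 V' → Bool) : ∏ e ∈ G.edgeFinset, signedEdgeWeight H σ (e.map φ)
        = ∏ e ∈ G.edgeFinset, if σ (e.map φ) then (-1 : ℝ) else 1 :=
      prod_congr rfl fun e he =>
        if_pos (ψ.map_mem_edgeSet (G.mem_edgeFinset.mp he))
    rw [sum_congr rfl fun σ _ => hsign σ, sum_prod_sign_comp]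
    exact prod_eq_zero (mem_univ b) (if_neg hodd)
  · push Not at hφ
    obtain ⟨a, b, hab, hφab⟩ := hφ
    refine sum_eq_zero fun σ _ => prod_eq_zero (G.mem_edgeFinset.mpr (G.mem_edgeSet.mpr hab)) ?_
    simp [signedEdgeWeight, hφab]

theorem homDensity_signedEdgeWeight_false_pos {V : Type} [Fintype V] [MeasurableSpace V]
    [MeasurableSingletonClass V] (G : SimpleGraph V) {f : UI → V} (hf : Measurable f)
    (hfib : ∀ v, 0 < volume.real (f ⁻¹' {v})) :
    0 < homDensity G (fun x y => signedEdgeWeight G (fun _ => false) s(f x, f y)) := by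
  have hweight_nonneg (e : Sym2 V) : 0 ≤ signedEdgeWeight G (fun _ => false) e := by
    unfold signedEdgeWeight
    split_ifs <;> simp_all
  have hid : ∏ e ∈ G.edgeFinset, signedEdgeWeight G (fun _ => false) (e.map id) = 1 :=
    prod_eq_one fun e he => by simp_all [signedEdgeWeight]
  rw [homDensity_sym2_comp G _ hf]
  refine sum_pos' (fun φ _ => mul_nonneg (prod_nonneg fun _ _ => measureReal_nonneg)
    (prod_nonneg fun e _ => hweight_nonneg _)) ⟨id, mem_univ _, ?_⟩
  rw [hid, mul_one]
  exact prod_pos fun v _ => hfib v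

end PositiveGraph

open PositiveGraph

theorem positive_implies_even_self_hom {V : Type} [Fintype V] (G : SimpleGraph V)
    (h : Positive G) : ∃ φ : G →g G, IsEvenHom φ := by
  rcases isEmpty_or_nonempty V with _ | _
  · exact ⟨.id, fun e _ => isEmptyElim (Quot.out e).1⟩
  let _ : MeasurableSpace V := ⊤
  obtain ⟨f, hf, hfib⟩ := exists_measurable_forall_volume_preimage_pos V
  by_contra! hno
  let W (σ : Sym2 V → Bool) (x y : UI) : ℝ := signedEdgeWeight G σ s(f x, f y)
  have hsum : ∑ σ, homDensity G (W σ) = 0 := by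
    simp only [W, homDensity_sym2_comp G _ hf]
    rw [sum_comm]
    refine sum_eq_zero fun φ _ => ?_
    rw [← mul_sum, sum_prod_signedEdgeWeight_eq_zero hno φ, mul_zero]
  have hle : homDensity G (W fun _ => false) ≤ ∑ σ, homDensity G (W σ) :=
    single_le_sum (fun σ _ => h _ (isKernel_sym2_comp _ hf)) (mem_univ _)
  linarith [homDensity_signedEdgeWeight_false_pos G hf hfib]
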